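/- The measure ρ on I = [0,1] ∪ {∞} with ρ([0,t]) = t/2 for t ∈ [0,1] and ρ({∞}) = 1/2 solves the recursive distributional equation Y ≐ χ[τ,κ](Y₁,Y₂), where τ is uniform on [0,1], κ is uniform on {1,2}, Y₁,Y₂ are independent copies of Y, all independent, and χ[τ,1](x,y) = x if x > τ, = ∞ if x ≤ τ, while χ[τ,2](x,y) = x∧y. -/

import Mathlib

/-!
It suffices to compare distribution functions. For `a ≠ ∞`, condition on `(τ, κ)`.
If `κ = 2`, then `χ ≤ a` iff `min Y₁ Y₂ ≤ a`, which has probability `1 - (1 - F a)²`.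
If `κ = 1`, then `χ ≤ a` iff `τ < Y₁ ≤ a`, since a value `Y₁ ≤ τ` is sent to `∞`; averaged
over `τ` this gives `∫₀¹ ρ (τ, a] dτ`. With `F a = s / 2`, `s = min a 1`, the two halves are
`s - s² / 4` and `s² / 4`, and their average is `F a`.
-/

open MeasureTheory Set
open scoped ENNReal

/-- The map χ[τ,κ](x,y) on I = [0,1] ∪ {∞}, encoded in ℝ≥0∞, with κ ∈ {1,2} encoded
as a Bool (false ↔ κ = 1, true ↔ κ = 2):
χ[τ,1](x,y) = x if x > τ, ∞ if x ≤ τ; χ[τ,2](x,y) = min x y. -/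
noncomputable def chiMap (t : ℝ) (k : Bool) (x y : ℝ≥0∞) : ℝ≥0∞ :=
  if k then min x y else (if ENNReal.ofReal t < x then x else ⊤)

/-- The uniform distribution on {1,2}, encoded as a measure on Bool. -/
noncomputable def unifBool : Measure Bool :=
  (2:ℝ≥0∞)⁻¹ • Measure.dirac true + (2:ℝ≥0∞)⁻¹ • Measure.dirac false

instance : IsProbabilityMeasure unifBool :=
  ⟨by simp [unifBool, ENNReal.inv_two_add_inv_two]⟩

lemma lintegral_unifBool (f : Bool → ℝ≥0∞) :
    ∫⁻ k, f k ∂unifBool = 2⁻¹ * f true + 2⁻¹ * f false := by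
  simp [unifBool, lintegral_add_measure, lintegral_dirac]

lemma measure_Ioc_eq_sub_Iic {α : Type*} [MeasurableSpace α] [TopologicalSpace α]
    [LinearOrder α] [OrderClosedTopology α] [OpensMeasurableSpace α]
    (μ : Measure α) [IsFiniteMeasure μ] (a b : α) :
    μ (Ioc a b) = μ (Iic b) - μ (Iic a) := by
  rcases le_total a b with hab | hba
  · rw [← Iic_sdiff_Iic, measure_sdiff (Iic_subset_Iic.2 hab) nullMeasurableSet_Iic
      (measure_ne_top μ _)]
  · rw [Ioc_eq_empty (not_lt.2 hba), measure_empty,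
      tsub_eq_zero_of_le (measure_mono (Iic_subset_Iic.2 hba))]

lemma setLIntegral_Icc_ofReal_sub_div_two {s : ℝ} (hs : s ∈ Icc (0:ℝ) 1) :
    ∫⁻ t in Icc (0:ℝ) 1, ENNReal.ofReal ((s - t) / 2) = ENNReal.ofReal (s ^ 2 / 4) := by
  have hzero : ∫⁻ t in Ioc s 1, ENNReal.ofReal ((s - t) / 2) = 0 :=
    (setLIntegral_eq_zero_iff measurableSet_Ioc (by fun_prop)).2 <|
      Filter.Eventually.of_forall fun t ht => ENNReal.ofReal_of_nonpos (by linarith [ht.1])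
  rw [← Icc_union_Ioc_eq_Icc hs.1 hs.2, lintegral_union measurableSet_Ioc
    ((Iic_disjoint_Ioc le_rfl).mono_left Icc_subset_Iic_self), hzero, add_zero,
    ← ofReal_integral_eq_lintegral_ofReal
      ((continuous_sub_left s).div_const 2).integrableOn_Icc
      (ae_restrict_of_forall_mem measurableSet_Icc fun t ht =>
        div_nonneg (sub_nonneg.2 ht.2) two_pos.le),
    integral_Icc_eq_integral_Ioc, ← intervalIntegral.integral_of_le hs.1,
    intervalIntegral.integral_comp_sub_left (fun x => x / 2), sub_self, sub_zero,
    intervalIntegral.integral_div, integral_id]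
  congr 1
  ring

lemma inv_two_mul_one_sub_sq_add_inv_two_mul_ofReal {s : ℝ} (hs : s ∈ Icc (0:ℝ) 1) :
    2⁻¹ * (1 - (1 - ENNReal.ofReal (s / 2)) ^ 2) + 2⁻¹ * ENNReal.ofReal (s ^ 2 / 4)
      = ENNReal.ofReal (s / 2) := by
  rw [← ENNReal.ofReal_one, ← ENNReal.ofReal_sub _ (by linarith [hs.1]),
    ← ENNReal.ofReal_pow (by linarith [hs.2]), ← ENNReal.ofReal_sub _ (sq_nonneg _),
    ← ENNReal.ofReal_ofNat 2, ← ENNReal.ofReal_inv_of_pos two_pos,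
    ← ENNReal.ofReal_mul (by norm_num), ← ENNReal.ofReal_mul (by norm_num),
    ← ENNReal.ofReal_add (by nlinarith [hs.1, hs.2]) (by positivity)]
  congr 1
  ring

lemma measurable_chiMap_uncurry : Measurable
    (fun p : (ℝ × Bool) × ℝ≥0∞ × ℝ≥0∞ => chiMap p.1.1 p.1.2 p.2.1 p.2.2) := by
  unfold chiMap
  refine Measurable.ite (measurableSet_eq_fun (g := fun _ => true) (by fun_prop) measurable_const)
    (by fun_prop) (Measurable.ite (measurableSet_lt (by fun_prop) (by fun_prop)) ?_ ?_) <;> fun_prop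

lemma chiMap_true_le_iff (t : ℝ) (a x y : ℝ≥0∞) :
    chiMap t true x y ≤ a ↔ (x, y) ∈ (Ioi a ×ˢ Ioi a)ᶜ := by
  simp [chiMap, or_iff_not_imp_left]

lemma chiMap_false_le_iff (t : ℝ) {a : ℝ≥0∞} (ha : a ≠ ⊤) (x y : ℝ≥0∞) :
    chiMap t false x y ≤ a ↔ (x, y) ∈ Ioc (ENNReal.ofReal t) a ×ˢ univ := by
  by_cases h : ENNReal.ofReal t < x <;> simp [chiMap, h, ha]

lemma map_chiMap_Iic (ν : Measure ℝ) [IsProbabilityMeasure ν] (ρ : Measure ℝ≥0∞)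
    [IsProbabilityMeasure ρ] {a : ℝ≥0∞} (ha : a ≠ ⊤) :
    Measure.map (fun p : (ℝ × Bool) × ℝ≥0∞ × ℝ≥0∞ => chiMap p.1.1 p.1.2 p.2.1 p.2.2)
      ((ν.prod unifBool).prod (ρ.prod ρ)) (Iic a)
      = 2⁻¹ * (1 - ρ (Ioi a) ^ 2) + 2⁻¹ * ∫⁻ t, ρ (Ioc (ENNReal.ofReal t) a) ∂ν := by
  set S := (fun p : (ℝ × Bool) × ℝ≥0∞ × ℝ≥0∞ => chiMap p.1.1 p.1.2 p.2.1 p.2.2) ⁻¹' Iic a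
  have hS : MeasurableSet S := measurable_chiMap_uncurry measurableSet_Iic
  rw [Measure.map_apply measurable_chiMap_uncurry measurableSet_Iic, Measure.prod_apply hS,
    lintegral_prod _ (measurable_measure_prodMk_left hS).aemeasurable]
  have hsection : ∀ t : ℝ, ∫⁻ k, (ρ.prod ρ) (Prod.mk (t, k) ⁻¹' S) ∂unifBool
      = 2⁻¹ * (1 - ρ (Ioi a) ^ 2) + 2⁻¹ * ρ (Ioc (ENNReal.ofReal t) a) := by
    intro t
    have htrue : Prod.mk (t, true) ⁻¹' S = (Ioi a ×ˢ Ioi a)ᶜ :=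
      Set.ext fun p => chiMap_true_le_iff t a p.1 p.2
    have hfalse : Prod.mk (t, false) ⁻¹' S = Ioc (ENNReal.ofReal t) a ×ˢ univ :=
      Set.ext fun p => chiMap_false_le_iff t ha p.1 p.2
    rw [lintegral_unifBool, htrue, hfalse,
      prob_compl_eq_one_sub (measurableSet_Ioi.prod measurableSet_Ioi), Measure.prod_prod,
      Measure.prod_prod, measure_univ, mul_one, sq]
  have hmeas : Measurable fun t : ℝ => ρ (Ioc (ENNReal.ofReal t) a) :=
    Antitone.measurable fun s t hst =>
      measure_mono (Ioc_subset_Ioc_left (ENNReal.ofReal_le_ofReal hst))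
  simp_rw [hsection]
  rw [lintegral_add_left measurable_const, lintegral_const, measure_univ, mul_one,
    lintegral_const_mul _ hmeas]

section
variable {ρ : Measure ℝ≥0∞} [IsProbabilityMeasure ρ]

lemma measure_Iic_eq_of_cdf
    (hcdf : ∀ t : ℝ, t ∈ Icc (0:ℝ) 1 → ρ (Icc 0 (ENNReal.ofReal t)) = ENNReal.ofReal (t / 2))
    (hinf : ρ {⊤} = 1 / 2) {a : ℝ≥0∞} (ha : a ≠ ⊤) :
    ρ (Iic a) = ENNReal.ofReal (min a.toReal 1 / 2) := by
  rcases le_total a 1 with h | h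
  · have h' : a.toReal ≤ 1 := by simpa using (ENNReal.toReal_le_toReal ha ENNReal.one_ne_top).2 h
    rw [min_eq_left h', ← hcdf _ ⟨ENNReal.toReal_nonneg, h'⟩, ENNReal.ofReal_toReal ha,
      ← bot_eq_zero, Icc_bot]
  · have h' : 1 ≤ a.toReal := by simpa using (ENNReal.toReal_le_toReal ENNReal.one_ne_top ha).2 h
    rw [min_eq_right h']
    apply le_antisymm
    · calc ρ (Iic a) ≤ ρ {⊤}ᶜ := measure_mono fun x hx hxt => ha (top_le_iff.1 (hxt ▸ hx))
        _ = ENNReal.ofReal (1 / 2) := by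
          rw [prob_compl_eq_one_sub (measurableSet_singleton _), hinf, one_div,
            ENNReal.one_sub_inv_two, one_div, ENNReal.ofReal_inv_of_pos two_pos,
            ENNReal.ofReal_ofNat]
    · calc ENNReal.ofReal (1 / 2) = ρ (Icc 0 1) := by simpa using (hcdf 1 (by norm_num)).symm
        _ ≤ ρ (Iic a) := measure_mono (Icc_subset_Iic_self.trans (Iic_subset_Iic.2 h))

lemma measure_Ioc_eq_of_cdf
    (hcdf : ∀ t : ℝ, t ∈ Icc (0:ℝ) 1 → ρ (Icc 0 (ENNReal.ofReal t)) = ENNReal.ofReal (t / 2))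
    (hinf : ρ {⊤} = 1 / 2) {a : ℝ≥0∞} (ha : a ≠ ⊤) {t : ℝ} (ht : t ∈ Icc (0:ℝ) 1) :
    ρ (Ioc (ENNReal.ofReal t) a) = ENNReal.ofReal ((min a.toReal 1 - t) / 2) := by
  rw [measure_Ioc_eq_sub_Iic, measure_Iic_eq_of_cdf hcdf hinf ha,
    measure_Iic_eq_of_cdf hcdf hinf ENNReal.ofReal_ne_top, ENNReal.toReal_ofReal ht.1,
    min_eq_left ht.2, ← ENNReal.ofReal_sub _ (by linarith [ht.1]), ← sub_div]

end

theorem stmt1 (ρ : Measure ℝ≥0∞) [IsProbabilityMeasure ρ]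
    (hcdf : ∀ t : ℝ, t ∈ Set.Icc (0:ℝ) 1 →
      ρ (Set.Icc 0 (ENNReal.ofReal t)) = ENNReal.ofReal (t/2))
    (hinf : ρ {⊤} = 1/2) :
    Measure.map (fun p : (ℝ × Bool) × ℝ≥0∞ × ℝ≥0∞ => chiMap p.1.1 p.1.2 p.2.1 p.2.2)
      (((volume.restrict (Set.Icc (0:ℝ) 1)).prod unifBool).prod (ρ.prod ρ)) = ρ := by
  have : IsProbabilityMeasure (volume.restrict (Icc (0:ℝ) 1)) := ⟨by simp⟩
  have := Measure.isProbabilityMeasure_map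
    (μ := ((volume.restrict (Icc (0:ℝ) 1)).prod unifBool).prod (ρ.prod ρ))
    measurable_chiMap_uncurry.aemeasurable
  refine Measure.ext_of_Iic _ _ fun a => ?_
  rcases eq_or_ne a ⊤ with rfl | ha
  · simp only [Iic_top, measure_univ]
  set s := min a.toReal 1
  have hs : s ∈ Icc (0:ℝ) 1 := ⟨by positivity, min_le_right _ _⟩
  have hIoc : ∫⁻ t in Icc (0:ℝ) 1, ρ (Ioc (ENNReal.ofReal t) a)
      = ∫⁻ t in Icc (0:ℝ) 1, ENNReal.ofReal ((s - t) / 2) :=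
    setLIntegral_congr_fun measurableSet_Icc fun t ht => measure_Ioc_eq_of_cdf hcdf hinf ha ht
  rw [map_chiMap_Iic _ ρ ha, hIoc, setLIntegral_Icc_ofReal_sub_div_two hs,
    ← compl_Iic, prob_compl_eq_one_sub measurableSet_Iic, measure_Iic_eq_of_cdf hcdf hinf ha,
    inv_two_mul_one_sub_sq_add_inv_two_mul_ofReal hs]
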